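/- (Corollary 1) Let s₁ = (d₁−1)/2 and s₂ = (d₂−1)/2 with d₁, d₂ ≥ 2, and let N ≥ k ≥ 2 be integers with s₂·(k−1) ≥ N·s₁. Then there exists a unit vector ψ in (ℂ^{d₂})^{⊗N} that is a tensor product of a state on k sites and single-site states on the remaining N−k sites (hence k-producible) such that Var_ψ(J^z) ≥ s₁²N², i.e., its (pure-state) quantum Fisher information 4·Var_ψ(J^z) is at least the maximal quantum Fisher information 4·s₁²N² achievable by any N-party spin-s₁ state. In particular, ψ = (1/√2)(|m=−s₂⟩^{⊗k} + |m=s₂⟩^{⊗k}) ⊗ |m=s₂⟩^{⊗(N−k)} works. -/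
import Mathlib


open Matrix Complex

/-- The spin quantum number `s = (d-1)/2` for local dimension `d`. -/
noncomputable def sval (d : ℕ) : ℝ := ((d : ℝ) - 1) / 2

/-- The magnetic quantum number `m = j - s` attached to the `j`-th basis vector,
so that `m` runs over `-s, -s+1, …, s`. -/
noncomputable def mval (d : ℕ) (j : Fin d) : ℝ := (j : ℝ) - sval d

/-- The spin-`s` operator `S^x`:
`⟨m'|S^x|m⟩ = (δ_{m',m+1} + δ_{m'+1,m}) (1/2) √(s(s+1) - m' m)`. -/
noncomputable def Sx (d : ℕ) : Matrix (Fin d) (Fin d) ℂ := fun j' j =>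
  ((if (j' : ℕ) = (j : ℕ) + 1 then 1 else 0) + (if (j' : ℕ) + 1 = (j : ℕ) then 1 else 0)) *
    (1 / 2) * (Real.sqrt (sval d * (sval d + 1) - mval d j' * mval d j) : ℂ)

/-- The spin-`s` operator `S^y`:
`⟨m'|S^y|m⟩ = (δ_{m',m+1} - δ_{m'+1,m}) (1/(2i)) √(s(s+1) - m' m)`. -/
noncomputable def Sy (d : ℕ) : Matrix (Fin d) (Fin d) ℂ := fun j' j =>
  ((if (j' : ℕ) = (j : ℕ) + 1 then 1 else 0) - (if (j' : ℕ) + 1 = (j : ℕ) then 1 else 0)) *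
    (1 / (2 * Complex.I)) * (Real.sqrt (sval d * (sval d + 1) - mval d j' * mval d j) : ℂ)

/-- The spin-`s` operator `S^z`: `⟨m'|S^z|m⟩ = δ_{m',m} m`. -/
noncomputable def Sz (d : ℕ) : Matrix (Fin d) (Fin d) ℂ := fun j' j =>
  if j' = j then (mval d j : ℂ) else 0

/-- The three spin-`s` matrices `S^x, S^y, S^z`, indexed by `α : Fin 3`. -/
noncomputable def spin (d : ℕ) : Fin 3 → Matrix (Fin d) (Fin d) ℂ := ![Sx d, Sy d, Sz d]

/-- The single-site operator `A_i` acting as `A` on the `i`-th tensor factor of `(ℂ^d)^{⊗N}`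
and as the identity on all other factors. -/
noncomputable def siteOp (d N : ℕ) (A : Matrix (Fin d) (Fin d) ℂ) (i : Fin N) :
    Matrix (Fin N → Fin d) (Fin N → Fin d) ℂ := fun f g =>
  A (f i) (g i) * ∏ j ∈ Finset.univ.erase i, (if f j = g j then 1 else 0)

/-- The collective spin operator `J = Σ_{i=1}^N A_i` on `(ℂ^d)^{⊗N}`. -/
noncomputable def collOp (d N : ℕ) (A : Matrix (Fin d) (Fin d) ℂ) :
    Matrix (Fin N → Fin d) (Fin N → Fin d) ℂ := ∑ i : Fin N, siteOp d N A i

/-- The variance `Var_ψ(A) = ⟨ψ, A²ψ⟩ - ⟨ψ, Aψ⟩²` of an observable `A` in a state `ψ`. -/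
noncomputable def variance {ι : Type*} [Fintype ι] (A : Matrix ι ι ℂ) (ψ : ι → ℂ) : ℂ :=
  star ψ ⬝ᵥ (A * A).mulVec ψ - (star ψ ⬝ᵥ A.mulVec ψ) ^ 2

lemma collOp_Sz_apply (d N : ℕ) (f g : Fin N → Fin d) :
    collOp d N (Sz d) f g = if f = g then ((∑ i, mval d (f i) : ℝ) : ℂ) else 0 := by
  classical
  simp only [collOp, Matrix.sum_apply, siteOp, Sz]
  by_cases h : f = g
  · subst h
    simp [Complex.ofReal_sum]
  · simp only [if_neg h]
    apply Finset.sum_eq_zero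
    intro i _
    obtain ⟨j₀, hj₀⟩ := Function.ne_iff.mp h
    by_cases hij : i = j₀
    · subst hij
      rw [if_neg hj₀, zero_mul]
    · rw [Finset.prod_eq_zero (i := j₀) (by simp [Ne.symm hij]) (by rw [if_neg hj₀]),
        mul_zero]

lemma collOp_Sz_mulVec (d N : ℕ) (ψ : (Fin N → Fin d) → ℂ) :
    (collOp d N (Sz d)).mulVec ψ = fun f => ((∑ i, mval d (f i) : ℝ) : ℂ) * ψ f := by
  classical
  funext f
  simp only [Matrix.mulVec, dotProduct, collOp_Sz_apply, ite_mul, zero_mul]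
  rw [Finset.sum_ite_eq]
  simp

lemma two_point_sum {ι : Type*} [Fintype ι] [DecidableEq ι] (g₁ g₂ : ι) (h : g₁ ≠ g₂)
    (A B : ι → ℂ) :
    ∑ f, (if f = g₁ then A f else if f = g₂ then B f else 0) = A g₁ + B g₂ := by
  rw [show (fun f => if f = g₁ then A f else if f = g₂ then B f else 0)
      = fun f => (if f = g₁ then A f else 0) + (if f = g₂ then B f else 0) by
    funext f
    by_cases h1 : f = g₁
    · subst h1; simp [h]
    · simp [h1]]
  rw [Finset.sum_add_distrib]
  simp [Finset.sum_ite_eq']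

lemma two_point_dot {ι : Type*} [Fintype ι] [DecidableEq ι] (g₁ g₂ : ι) (h : g₁ ≠ g₂)
    (a : ℂ) (c : ι → ℂ) :
    (star (fun f => if f = g₁ then a else if f = g₂ then a else 0) : ι → ℂ) ⬝ᵥ
      (fun f => c f * (if f = g₁ then a else if f = g₂ then a else 0))
    = (star a * a) * (c g₁ + c g₂) := by
  classical
  simp only [dotProduct, Pi.star_apply]
  have hterm : ∀ f, star (if f = g₁ then a else if f = g₂ then a else 0) *
      (c f * (if f = g₁ then a else if f = g₂ then a else 0))
      = if f = g₁ then (fun f => star a * a * c f) f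
        else if f = g₂ then (fun f => star a * a * c f) f else 0 := by
    intro f
    by_cases h1 : f = g₁
    · simp only [if_pos h1]; ring
    · by_cases h2 : f = g₂
      · simp only [if_neg h1, if_pos h2]; ring
      · simp [h1, h2]
  rw [Finset.sum_congr rfl (fun f _ => hterm f), two_point_sum g₁ g₂ h]
  ring

open scoped ComplexOrder in
/-- (Corollary 1) Let `s₁ = (d₁-1)/2`, `s₂ = (d₂-1)/2`, and let `N ≥ k ≥ 2` with
`s₂(k-1) ≥ Ns₁`. Then there is a unit vector `ψ ∈ (ℂ^{d₂})^{⊗N}` that is a product of a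
state on `k` sites and single-site states on the remaining `N-k` sites (hence
`k`-producible), with `Var_ψ(J^z) ≥ s₁²N²`, i.e. its pure-state QFI `4·Var_ψ(J^z)` is at
least the maximal QFI `4s₁²N²` of any `N`-party spin-`s₁` state. In particular,
`ψ = (1/√2)(|m=-s₂⟩^{⊗k} + |m=s₂⟩^{⊗k}) ⊗ |m=s₂⟩^{⊗(N-k)}` works. -/
theorem k_producible_beats_lower_spin (d₁ d₂ N k : ℕ)
    (hd₁ : 2 ≤ d₁) (hd₂ : 2 ≤ d₂) (hk : 2 ≤ k) (hkN : k ≤ N)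
    (hcond : (N : ℝ) * sval d₁ ≤ sval d₂ * ((k : ℝ) - 1)) :
    let lo : Fin d₂ := ⟨0, by omega⟩
    let hi : Fin d₂ := ⟨d₂ - 1, by omega⟩
    let g₁ : Fin N → Fin d₂ := fun i => if (i : ℕ) < k then lo else hi
    let g₂ : Fin N → Fin d₂ := fun _ => hi
    ∃ ψ : (Fin N → Fin d₂) → ℂ,
      (ψ = fun f => if f = g₁ then ((1 / Real.sqrt 2 : ℝ) : ℂ)
        else if f = g₂ then ((1 / Real.sqrt 2 : ℝ) : ℂ) else 0) ∧
      star ψ ⬝ᵥ ψ = 1 ∧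
      (((sval d₁) ^ 2 * (N : ℝ) ^ 2 : ℝ) : ℂ) ≤ variance (collOp d₂ N (Sz d₂)) ψ ∧
      ((4 * (sval d₁) ^ 2 * (N : ℝ) ^ 2 : ℝ) : ℂ) ≤ 4 * variance (collOp d₂ N (Sz d₂)) ψ := by
  classical
  intro lo hi g₁ g₂
  set s₂ := sval d₂ with hs₂
  have hd₂R : (2 : ℝ) ≤ (d₂ : ℝ) := by exact_mod_cast hd₂
  have hs₂pos : 0 < s₂ := by simp only [hs₂, sval]; linarith
  have hg : g₁ ≠ g₂ := by
    intro h
    have h0 := congrFun h ⟨0, by omega⟩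
    simp only [g₁, g₂] at h0
    rw [if_pos (show ((0:ℕ) < k) by omega)] at h0
    have : (lo : ℕ) = (hi : ℕ) := by rw [h0]
    simp only [lo, hi] at this
    omega
  set a : ℂ := ((1 / Real.sqrt 2 : ℝ) : ℂ) with ha
  have h2 : (1 / Real.sqrt 2) * (1 / Real.sqrt 2) = (1/2 : ℝ) := by
    rw [div_mul_div_comm, Real.mul_self_sqrt (by norm_num : (0:ℝ) ≤ 2)]
    norm_num
  have hstar : star a = a := by
    rw [ha]; exact Complex.conj_ofReal _
  have haa : star a * a = (1/2 : ℂ) := by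
    rw [hstar, ha, ← Complex.ofReal_mul, h2]
    norm_num
  set ψ : (Fin N → Fin d₂) → ℂ := fun f => if f = g₁ then a else if f = g₂ then a else 0
    with hψ
  -- values of mval at lo and hi
  have hmhi : mval d₂ hi = s₂ := by
    have h1 : ((d₂ - 1 : ℕ) : ℝ) = (d₂ : ℝ) - 1 := by
      have : (1:ℕ) ≤ d₂ := by omega
      push_cast [this]; ring
    simp only [mval, hi, hs₂, sval]
    rw [show ((⟨d₂ - 1, by omega⟩ : Fin d₂) : ℝ) = ((d₂ - 1 : ℕ) : ℝ) from rfl, h1]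
    ring
  have hmlo : mval d₂ lo = -s₂ := by
    simp only [mval, lo, hs₂]
    norm_num
  -- eigenvalues
  have hE2 : ∑ i : Fin N, mval d₂ (g₂ i) = (N : ℝ) * s₂ := by
    simp only [g₂, hmhi]
    rw [Finset.sum_const, Finset.card_univ, Fintype.card_fin, nsmul_eq_mul]
  have hNk : ((N - k : ℕ) : ℝ) = (N : ℝ) - (k : ℝ) := by
    push_cast [Nat.cast_sub hkN]; ring
  have hE1 : ∑ i : Fin N, mval d₂ (g₁ i) = (N : ℝ) * s₂ - 2 * (k : ℝ) * s₂ := by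
    have hpt : ∀ i : Fin N, mval d₂ (g₁ i) = if (i : ℕ) < k then -s₂ else s₂ := by
      intro i
      simp only [g₁]
      split <;> simp [hmlo, hmhi]
    rw [Finset.sum_congr rfl (fun i _ => hpt i),
      Fin.sum_univ_eq_sum_range (fun i => if i < k then -s₂ else s₂) N]
    have hN : N = k + (N - k) := by omega
    conv_lhs => rw [hN]
    rw [Finset.sum_range_add]
    rw [Finset.sum_congr rfl (fun i hi => if_pos (Finset.mem_range.mp hi)),
      Finset.sum_congr rfl (fun i _ => if_neg (by omega))]
    rw [Finset.sum_const, Finset.sum_const, Finset.card_range, Finset.card_range,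
      nsmul_eq_mul, nsmul_eq_mul, hNk]
    ring
  -- norm
  have hnorm : star ψ ⬝ᵥ ψ = 1 := by
    rw [hψ]
    have h := two_point_dot g₁ g₂ hg a (fun _ => (1 : ℂ))
    simp only [one_mul] at h
    rw [h, haa]
    norm_num
  have hmv : (collOp d₂ N (Sz d₂)).mulVec ψ
      = fun f => ((∑ i, mval d₂ (f i) : ℝ) : ℂ) * ψ f := collOp_Sz_mulVec d₂ N ψ
  have hexp : star ψ ⬝ᵥ (collOp d₂ N (Sz d₂)).mulVec ψ
      = (1/2 : ℂ) * ((((N : ℝ) * s₂ - 2 * (k : ℝ) * s₂ : ℝ) : ℂ)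
          + (((N : ℝ) * s₂ : ℝ) : ℂ)) := by
    rw [hmv]
    simp only [hψ]
    rw [two_point_dot g₁ g₂ hg a (fun f => ((∑ i, mval d₂ (f i) : ℝ) : ℂ)), haa]
    rw [hE1, hE2]
  have hmv2 : (collOp d₂ N (Sz d₂)).mulVec ((collOp d₂ N (Sz d₂)).mulVec ψ)
      = fun f => (((∑ i, mval d₂ (f i) : ℝ) : ℂ) * ((∑ i, mval d₂ (f i) : ℝ) : ℂ)) * ψ f := by
    rw [collOp_Sz_mulVec, collOp_Sz_mulVec]
    funext f
    simp only []
    ring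
  have hsq : star ψ ⬝ᵥ (collOp d₂ N (Sz d₂) * collOp d₂ N (Sz d₂)).mulVec ψ
      = (1/2 : ℂ) * ((((N : ℝ) * s₂ - 2 * (k : ℝ) * s₂ : ℝ) : ℂ)
            * (((N : ℝ) * s₂ - 2 * (k : ℝ) * s₂ : ℝ) : ℂ)
          + (((N : ℝ) * s₂ : ℝ) : ℂ) * (((N : ℝ) * s₂ : ℝ) : ℂ)) := by
    rw [← Matrix.mulVec_mulVec, hmv2]
    simp only [hψ]
    rw [two_point_dot g₁ g₂ hg a
      (fun f => ((∑ i, mval d₂ (f i) : ℝ) : ℂ) * ((∑ i, mval d₂ (f i) : ℝ) : ℂ)), haa]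
    rw [hE1, hE2]
  have hvar : variance (collOp d₂ N (Sz d₂)) ψ = (((k : ℝ)^2 * s₂^2 : ℝ) : ℂ) := by
    unfold variance
    rw [hsq, hexp]
    push_cast
    ring
  -- the real inequality
  have hs1 : 0 ≤ sval d₁ := by
    have : (2 : ℝ) ≤ (d₁ : ℝ) := by exact_mod_cast hd₁
    simp only [sval]; linarith
  have hNnn : (0 : ℝ) ≤ (N : ℝ) := Nat.cast_nonneg N
  have h0 : 0 ≤ (N : ℝ) * sval d₁ := mul_nonneg hNnn hs1
  have h1 : (N : ℝ) * sval d₁ ≤ s₂ * (k : ℝ) := by nlinarith [hs₂pos.le]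
  have key : (sval d₁) ^ 2 * (N : ℝ) ^ 2 ≤ (k : ℝ)^2 * s₂^2 := by nlinarith
  refine ⟨ψ, hψ, hnorm, ?_, ?_⟩
  · rw [hvar, Complex.real_le_real]
    exact key
  · rw [hvar, show (4 : ℂ) * (((k : ℝ)^2 * s₂^2 : ℝ) : ℂ)
      = ((4 * ((k : ℝ)^2 * s₂^2) : ℝ) : ℂ) by push_cast; ring, Complex.real_le_real]
    nlinarith
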